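/- arXiv:math/0507574 — 4 statements merged into one kernel-verified Lean document; each statement's English description precedes it below -/
import Mathlib

section
/- For any n points p₀, p₁, ..., p_{n-1} in the open unit ball B^n ⊂ ℂⁿ, there exists a holomorphic automorphism of B^n that is not the identity but fixes all n points. (Equivalently, no set of n points in B^n is a determining set for Aut(B^n).) -/
/-!
The `n` points lie on a complex affine hyperplane `{z | ⟪v, z⟫ = c}` with `‖v‖ = 1`, and
`|c| < 1` because the hyperplane meets the ball. Conjugating the unitary reflection
`z ↦ z - 2 ⟪v, z⟫ v`, which fixes `v^⊥` pointwise, by the Möbius involution of the ball exchanging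
`0` and `c • v` gives an automorphism of the ball whose fixed points are exactly the slice
`⟪v, z⟫ = c`, and which is not the identity.
-/

open Metric Set Module
open scoped InnerProductSpace ComplexConjugate

theorem exists_norm_eq_one_inner_eq_of_card_le {𝕜 E ι : Type*} [RCLike 𝕜]
    [NormedAddCommGroup E] [InnerProductSpace 𝕜 E] [FiniteDimensional 𝕜 E]
    [Fintype ι] [Nonempty ι] (p : ι → E) (hcard : Fintype.card ι ≤ finrank 𝕜 E) :
    ∃ v : E, ‖v‖ = 1 ∧ ∀ i j, ⟪v, p i⟫_𝕜 = ⟪v, p j⟫_𝕜 := by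
  have hspan : vectorSpan 𝕜 (range p) ≠ ⊤ := by
    intro htop
    have hpos : 0 < Fintype.card ι := Fintype.card_pos
    have := finrank_vectorSpan_range_le 𝕜 p (Nat.sub_one_add_one hpos.ne').symm
    rw [htop, finrank_top] at this
    omega
  obtain ⟨v, hv_perp, hv⟩ :=
    (Submodule.ne_bot_iff _).mp (mt Submodule.orthogonal_eq_bot_iff.mp hspan)
  refine ⟨(‖v‖⁻¹ : 𝕜) • v, norm_smul_inv_norm hv, fun i j => ?_⟩
  have hij : ⟪v, p i - p j⟫_𝕜 = 0 :=
    Submodule.inner_left_of_mem_orthogonal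
      (vsub_mem_vectorSpan 𝕜 (mem_range_self i) (mem_range_self j)) hv_perp
  rw [inner_sub_right, sub_eq_zero] at hij
  rw [inner_smul_left, inner_smul_left, hij]

section BallReflection

variable {E : Type*} [NormedAddCommGroup E] [InnerProductSpace ℂ E] {v : E} {c : ℂ} {z : E}

noncomputable def ballReflectionDenom (v : E) (c : ℂ) (z : E) : ℂ :=
  1 + ‖c‖ ^ 2 - 2 * conj c * ⟪v, z⟫_ℂ

noncomputable def ballReflectionNumer (v : E) (c : ℂ) (z : E) : E :=
  (1 - ‖c‖ ^ 2 : ℂ) • z + (2 * (c - ⟪v, z⟫_ℂ)) • v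

/-- On the coordinate `λ = ⟪v, z⟫` this acts as the involution
`λ ↦ (2c - (1 + |c|²) λ) / (1 + |c|² - 2 c̄ λ)` of the disc fixing `c`, and on `v^⊥` it is
multiplication by `(1 - |c|²) / (1 + |c|² - 2 c̄ λ)`. -/
noncomputable def ballReflection (v : E) (c : ℂ) (z : E) : E :=
  (ballReflectionDenom v c z)⁻¹ • ballReflectionNumer v c z

/-- The analogue of `1 - |φ_a(z)|² = (1 - |a|²)(1 - |z|²) / |1 - ā z|²` for Möbius maps. -/
theorem norm_ballReflectionNumer_sq (hv : ‖v‖ = 1) (z : E) :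
    ‖ballReflectionNumer v c z‖ ^ 2
      = ‖ballReflectionDenom v c z‖ ^ 2 - (1 - ‖c‖ ^ 2) ^ 2 * (1 - ‖z‖ ^ 2) := by
  have hzv : ⟪z, v⟫_ℂ = conj ⟪v, z⟫_ℂ := (inner_conj_symm z v).symm
  rw [ballReflectionNumer, @norm_add_sq ℂ, inner_smul_left, inner_smul_right, hzv, norm_smul,
    norm_smul, hv, ballReflectionDenom]
  generalize ⟪v, z⟫_ℂ = w
  simp only [← Complex.ofReal_pow, Complex.ofReal_re, Complex.ofReal_im, mul_pow,
    Complex.sq_norm, Complex.normSq_apply, RCLike.re_to_complex,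
    Complex.mul_re, Complex.mul_im, Complex.sub_re, Complex.sub_im,
    Complex.add_re, Complex.add_im, Complex.one_re, Complex.one_im,
    Complex.conj_re, Complex.conj_im, Complex.re_ofNat, Complex.im_ofNat, map_sub, map_one]
  ring

theorem norm_ballReflectionNumer_lt (hv : ‖v‖ = 1) (hc : ‖c‖ < 1) (hz : ‖z‖ < 1) :
    ‖ballReflectionNumer v c z‖ < ‖ballReflectionDenom v c z‖ := by
  have hc' : 0 < 1 - ‖c‖ ^ 2 := by nlinarith [norm_nonneg c]
  have hz' : 0 < 1 - ‖z‖ ^ 2 := by nlinarith [norm_nonneg z]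
  have hgap := mul_pos (pow_pos hc' 2) hz'
  refine lt_of_pow_lt_pow_left₀ 2 (norm_nonneg _) ?_
  rw [norm_ballReflectionNumer_sq hv]
  linarith

theorem ballReflectionDenom_ne_zero (hv : ‖v‖ = 1) (hc : ‖c‖ < 1) (hz : ‖z‖ < 1) :
    ballReflectionDenom v c z ≠ 0 :=
  norm_pos_iff.mp ((norm_nonneg _).trans_lt (norm_ballReflectionNumer_lt hv hc hz))

theorem norm_ballReflection_lt_one (hv : ‖v‖ = 1) (hc : ‖c‖ < 1) (hz : ‖z‖ < 1) :
    ‖ballReflection v c z‖ < 1 := by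
  have hd := norm_pos_iff.mpr (ballReflectionDenom_ne_zero hv hc hz)
  rw [ballReflection, norm_smul, norm_inv, inv_mul_lt_iff₀ hd, mul_one]
  exact norm_ballReflectionNumer_lt hv hc hz

theorem mapsTo_ballReflection (hv : ‖v‖ = 1) (hc : ‖c‖ < 1) :
    MapsTo (ballReflection v c) (ball 0 1) (ball 0 1) := fun _ hz ↦ by
  rw [mem_ball_zero_iff] at hz ⊢
  exact norm_ballReflection_lt_one hv hc hz

theorem differentiableAt_ballReflection (hz : ballReflectionDenom v c z ≠ 0) :
    DifferentiableAt ℂ (ballReflection v c) z := by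
  have hinner : Differentiable ℂ (fun w : E ↦ ⟪v, w⟫_ℂ) := (innerSL ℂ v).differentiable
  unfold ballReflection ballReflectionNumer ballReflectionDenom at *
  fun_prop (disch := assumption)

theorem differentiableOn_ballReflection (hv : ‖v‖ = 1) (hc : ‖c‖ < 1) :
    DifferentiableOn ℂ (ballReflection v c) (ball 0 1) := fun _ hz ↦
  (differentiableAt_ballReflection
    (ballReflectionDenom_ne_zero hv hc (mem_ball_zero_iff.mp hz))).differentiableWithinAt

theorem inner_ballReflection (hv : ‖v‖ = 1) (z : E) :
    ⟪v, ballReflection v c z⟫_ℂ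
      = ((1 - ‖c‖ ^ 2) * ⟪v, z⟫_ℂ + 2 * (c - ⟪v, z⟫_ℂ)) / ballReflectionDenom v c z := by
  have hvv : ⟪v, v⟫_ℂ = 1 := by rw [inner_self_eq_norm_sq_to_K, hv]; norm_num
  simp only [ballReflection, ballReflectionNumer, inner_smul_right, inner_add_right, hvv]
  ring

theorem ballReflection_ballReflection (hv : ‖v‖ = 1) (hc : ‖c‖ ≠ 1)
    (hz : ballReflectionDenom v c z ≠ 0) : ballReflection v c (ballReflection v c z) = z := by
  have hs : conj c * c = (‖c‖ ^ 2 : ℂ) := RCLike.conj_mul c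
  have hs1 : (1 - ‖c‖ ^ 2 : ℂ) ≠ 0 := by
    rw [sub_ne_zero, ne_comm]
    exact_mod_cast (pow_eq_one_iff_of_nonneg (norm_nonneg c) two_ne_zero).not.mpr hc
  have hinner := inner_ballReflection (c := c) hv z
  have hdenom : ballReflectionDenom v c (ballReflection v c z)
      = (1 - ‖c‖ ^ 2) ^ 2 / ballReflectionDenom v c z := by
    rw [ballReflectionDenom, hinner]
    field_simp
    unfold ballReflectionDenom
    linear_combination (-4 : ℂ) * hs
  rw [ballReflection, hdenom, ballReflectionNumer, hinner]
  unfold ballReflection ballReflectionNumer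
  match_scalars <;> field_simp
  unfold ballReflectionDenom
  linear_combination (-4 * ⟪v, z⟫_ℂ) * hs

theorem ballReflection_eq_self_iff (hv : ‖v‖ = 1) (hc : ‖c‖ < 1) (hz : ‖z‖ < 1) :
    ballReflection v c z = z ↔ ⟪v, z⟫_ℂ = c := by
  have hd := ballReflectionDenom_ne_zero hv hc hz
  have hs : conj c * c = (‖c‖ ^ 2 : ℂ) := RCLike.conj_mul c
  constructor
  · intro hfix
    have hsmall : ‖conj c * ⟪v, z⟫_ℂ‖ < 1 := by
      calc ‖conj c * ⟪v, z⟫_ℂ‖ ≤ ‖c‖ * (‖v‖ * ‖z‖) := by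
            rw [norm_mul, RCLike.norm_conj]; gcongr; exact norm_inner_le_norm v z
        _ < 1 := by rw [hv, one_mul]; nlinarith [norm_nonneg c, norm_nonneg z]
    have hquad : (⟪v, z⟫_ℂ - c) * (conj c * ⟪v, z⟫_ℂ - 1) = 0 := by
      have := inner_ballReflection (c := c) hv z
      rw [hfix, eq_div_iff hd, ballReflectionDenom] at this
      linear_combination (-1 / 2 : ℂ) * this - ⟪v, z⟫_ℂ * hs
    rcases mul_eq_zero.mp hquad with h | h
    · exact sub_eq_zero.mp h
    · exact absurd (sub_eq_zero.mp h ▸ hsmall) (by norm_num)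
  · intro hvz
    have hd' : ballReflectionDenom v c z = 1 - ‖c‖ ^ 2 := by
      rw [ballReflectionDenom, hvz, mul_assoc, hs]; ring
    rw [hd'] at hd
    rw [ballReflection, ballReflectionNumer, hd', hvz, sub_self, mul_zero, zero_smul, add_zero, smul_smul,
      inv_mul_cancel₀ hd, one_smul]

theorem exists_mem_ball_inner_ne (hv : ‖v‖ = 1) (c : ℂ) : ∃ z ∈ ball (0 : E) 1, ⟪v, z⟫_ℂ ≠ c := by
  by_contra! h
  have h0 := h 0 (mem_ball_self one_pos)
  have hhalf := h ((1 / 2 : ℂ) • v) (by rw [mem_ball_zero_iff, norm_smul, hv]; norm_num)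
  rw [inner_zero_right] at h0
  rw [inner_smul_right, inner_self_eq_norm_sq_to_K, hv, ← h0] at hhalf
  norm_num at hhalf

end BallReflection

/-- No `n` points in the open unit ball of `ℂⁿ` form a determining set for
`Aut(Bⁿ)`: there is a non-identity automorphism of the ball fixing all of them. -/
theorem ball_not_determined_by_n_points (n : ℕ) (hn : 1 ≤ n)
    (p : Fin n → EuclideanSpace ℂ (Fin n))
    (hp : ∀ i, p i ∈ ball (0 : EuclideanSpace ℂ (Fin n)) 1) :
    ∃ f g : EuclideanSpace ℂ (Fin n) → EuclideanSpace ℂ (Fin n),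
      DifferentiableOn ℂ f (ball 0 1) ∧
      DifferentiableOn ℂ g (ball 0 1) ∧
      MapsTo f (ball 0 1) (ball 0 1) ∧
      MapsTo g (ball 0 1) (ball 0 1) ∧
      (∀ z ∈ ball (0 : EuclideanSpace ℂ (Fin n)) 1, g (f z) = z) ∧
      (∀ z ∈ ball (0 : EuclideanSpace ℂ (Fin n)) 1, f (g z) = z) ∧
      (∀ i, f (p i) = p i) ∧
      (∃ z ∈ ball (0 : EuclideanSpace ℂ (Fin n)) 1, f z ≠ z) := by
  have : Nonempty (Fin n) := ⟨⟨0, hn⟩⟩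
  obtain ⟨v, hv, hvp⟩ := exists_norm_eq_one_inner_eq_of_card_le (𝕜 := ℂ) p (by simp)
  set c := ⟪v, p ⟨0, hn⟩⟫_ℂ
  have hc : ‖c‖ < 1 := (norm_inner_le_norm _ _).trans_lt <| by
    rw [hv, one_mul, ← mem_ball_zero_iff]; exact hp _
  have hdiff := differentiableOn_ballReflection hv hc
  have hmaps := mapsTo_ballReflection hv hc
  have hinv : ∀ z ∈ ball (0 : EuclideanSpace ℂ (Fin n)) 1,
      ballReflection v c (ballReflection v c z) = z := fun z hz ↦
    ballReflection_ballReflection hv hc.ne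
      (ballReflectionDenom_ne_zero hv hc (mem_ball_zero_iff.mp hz))
  obtain ⟨z, hz, hzc⟩ := exists_mem_ball_inner_ne hv c
  refine ⟨ballReflection v c, ballReflection v c, hdiff, hdiff, hmaps, hmaps, hinv, hinv,
    fun i ↦ ?_, z, hz, fun hfix ↦ hzc ?_⟩
  · exact (ballReflection_eq_self_iff hv hc (mem_ball_zero_iff.mp (hp i))).mpr (hvp i _)
  · exact (ballReflection_eq_self_iff hv hc (mem_ball_zero_iff.mp hz)).mp hfix
end

section
/- Every 3-dimensional real Lie subalgebra of u(2) equals su(2), the subalgebra of traceless skew-Hermitian 2×2 matrices. -/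
/-!
For skew-Hermitian `X` the trace is purely imaginary, so `L ∩ su(2)` is the kernel of `Im ∘ trace`
on `L` and has dimension at least `2`; it is closed under the bracket. Coordinates identify `su(2)`
with `ℝ³`, the bracket becoming twice the cross product. A cross-product-closed subspace of `ℝ³`
containing independent `u, v` contains the basis `u, v, u × v`, as
`det [u, v, u × v] = |u × v|² > 0`. Hence `L ∩ su(2) = su(2)`, and `L = su(2)` by dimension.
-/

open Matrix Module Complex

theorem Submodule.finrank_le_finrank_inf_ker_add_one {K V : Type*} [Field K] [AddCommGroup V]
    [Module K V] [FiniteDimensional K V] (p : Submodule K V) (f : V →ₗ[K] K) :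
    finrank K p ≤ finrank K ↥(p ⊓ LinearMap.ker f) + 1 := by
  have hsup := Submodule.finrank_sup_add_finrank_inf_eq p (LinearMap.ker f)
  have hker := LinearMap.finrank_range_add_finrank_ker f
  have hle : finrank K ↥(p ⊔ LinearMap.ker f) ≤ finrank K V := Submodule.finrank_le _
  have hrange : finrank K (LinearMap.range f) ≤ 1 :=
    (Submodule.finrank_le _).trans (finrank_self K).le
  omega

theorem Submodule.eq_top_of_crossProduct_mem {R : Type*} [Field R] [LinearOrder R]
    [IsStrictOrderedRing R] (K : Submodule R (Fin 3 → R))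
    (hK : ∀ u ∈ K, ∀ v ∈ K, u ⨯₃ v ∈ K) (h2 : 2 ≤ finrank R K) : K = ⊤ := by
  obtain ⟨b, hb⟩ := exists_linearIndependent_of_le_finrank h2
  set u : Fin 3 → R := ((b 0 : K) : Fin 3 → R)
  set v : Fin 3 → R := ((b 1 : K) : Fin 3 → R)
  have huv : LinearIndependent R ![u, v] := by
    have h := hb.map' K.subtype K.ker_subtype
    rwa [show K.subtype ∘ b = ![u, v] by ext i : 1; fin_cases i <;> rfl] at h
  have hw : (u ⨯₃ v) ⬝ᵥ (u ⨯₃ v) ≠ 0 := by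
    rwa [Ne, dotProduct_self_eq_zero, ← Ne, crossProduct_ne_zero_iff_linearIndependent]
  have hdet : det ![u, v, u ⨯₃ v] ≠ 0 := by
    rwa [← triple_product_eq_det, ← triple_product_permutation]
  have hspan := (linearIndependent_rows_of_det_ne_zero hdet).span_eq_top_of_card_eq_finrank'
    (by simp)
  rw [eq_top_iff, ← hspan, Submodule.span_le, Set.range_subset_iff]
  intro i
  fin_cases i
  exacts [(b 0).2, (b 1).2, hK _ (b 0).2 _ (b 1).2]

theorem Matrix.re_trace_eq_zero_of_conjTranspose_eq_neg {n : Type*} [Fintype n]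
    {X : Matrix n n ℂ} (hX : Xᴴ = -X) : X.trace.re = 0 := by
  have h := congrArg re (trace_conjTranspose X)
  rw [hX, trace_neg, neg_re, star_def, conj_re] at h
  linarith

def su2 : Submodule ℝ (Matrix (Fin 2) (Fin 2) ℂ) where
  carrier := {X | Xᴴ = -X ∧ X.trace = 0}
  add_mem' := by
    rintro X Y ⟨hX, hX'⟩ ⟨hY, hY'⟩
    exact ⟨by rw [conjTranspose_add, hX, hY, neg_add], by rw [trace_add, hX', hY', add_zero]⟩
  zero_mem' := by simp
  smul_mem' := by
    rintro r X ⟨hX, hX'⟩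
    exact ⟨by rw [conjTranspose_smul, hX, star_trivial, smul_neg],
      by rw [trace_smul, hX', smul_zero]⟩

noncomputable def su2OfVec : (Fin 3 → ℝ) →ₗ[ℝ] Matrix (Fin 2) (Fin 2) ℂ where
  toFun v := !![⟨0, v 0⟩, ⟨v 1, v 2⟩; ⟨-v 1, v 2⟩, ⟨0, -v 0⟩]
  map_add' u v := by ext i j; fin_cases i <;> fin_cases j <;> simp [Complex.ext_iff, add_comm]
  map_smul' r v := by ext i j; fin_cases i <;> fin_cases j <;> simp [Complex.ext_iff]

theorem su2OfVec_mem (v : Fin 3 → ℝ) : su2OfVec v ∈ su2 := by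
  constructor
  · ext i j; fin_cases i <;> fin_cases j <;> simp [su2OfVec, Complex.ext_iff]
  · simp [su2OfVec, trace, Fin.sum_univ_two, Complex.ext_iff]

theorem eq_su2OfVec_of_mem {X : Matrix (Fin 2) (Fin 2) ℂ} (hX : X ∈ su2) :
    X = su2OfVec ![(X 0 0).im, (X 0 1).re, (X 0 1).im] := by
  obtain ⟨hskew, htr⟩ := hX
  have h00 : (X 0 0).re = 0 := by
    have := congrArg re (congrFun₂ hskew 0 0)
    simp only [conjTranspose_apply, RCLike.star_def, conj_re, Matrix.neg_apply, neg_re] at this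
    linarith
  have h10 : X 1 0 = -star (X 0 1) := by
    have h01 : star (X 1 0) = -X 0 1 := congrFun₂ hskew 0 1
    rw [← star_star (X 1 0), h01, star_neg]
  have h11 : X 1 1 = -X 0 0 := by
    rw [trace_fin_two] at htr; linear_combination htr
  ext i j; fin_cases i <;> fin_cases j <;> simp [su2OfVec, Complex.ext_iff, h00, h10, h11]

theorem range_su2OfVec : LinearMap.range su2OfVec = su2 :=
  le_antisymm (LinearMap.range_le_iff_comap.mpr (eq_top_iff.mpr fun v _ => su2OfVec_mem v))
    fun _ hX => ⟨_, (eq_su2OfVec_of_mem hX).symm⟩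

theorem su2OfVec_injective : Function.Injective su2OfVec := by
  refine (injective_iff_map_eq_zero _).mpr fun v hv => ?_
  ext i
  fin_cases i
  · simpa [su2OfVec] using congrArg im (congrFun₂ hv 0 0)
  · simpa [su2OfVec] using congrArg re (congrFun₂ hv 0 1)
  · simpa [su2OfVec] using congrArg im (congrFun₂ hv 0 1)

theorem finrank_su2 : finrank ℝ su2 = 3 := by
  rw [← range_su2OfVec, LinearMap.finrank_range_of_inj su2OfVec_injective, finrank_fin_fun]

theorem lie_su2OfVec (u v : Fin 3 → ℝ) :
    ⁅su2OfVec u, su2OfVec v⁆ = su2OfVec ((2 : ℝ) • u ⨯₃ v) := by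
  ext i j; fin_cases i <;> fin_cases j <;>
    simp [su2OfVec, Ring.lie_def, cross_apply, Complex.ext_iff] <;> constructor <;> ring

theorem eq_su2_of_two_le_finrank (K : Submodule ℝ (Matrix (Fin 2) (Fin 2) ℂ)) (hK : K ≤ su2)
    (hbracket : ∀ X ∈ K, ∀ Y ∈ K, ⁅X, Y⁆ ∈ K) (h2 : 2 ≤ finrank ℝ K) : K = su2 := by
  have hmap : (K.comap su2OfVec).map su2OfVec = K :=
    Submodule.map_comap_eq_self (range_su2OfVec ▸ hK)
  have hcross : ∀ u ∈ K.comap su2OfVec, ∀ v ∈ K.comap su2OfVec, u ⨯₃ v ∈ K.comap su2OfVec := by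
    intro u hu v hv
    have := K.smul_mem (2⁻¹ : ℝ) (hbracket _ hu _ hv)
    rwa [lie_su2OfVec, ← map_smul, smul_smul, inv_mul_cancel₀ two_ne_zero, one_smul] at this
  have hfinrank : finrank ℝ (K.comap su2OfVec) = finrank ℝ K := by
    conv_rhs => rw [← hmap]
    exact (Submodule.equivMapOfInjective _ su2OfVec_injective _).finrank_eq
  rw [← hmap, (K.comap su2OfVec).eq_top_of_crossProduct_mem hcross (hfinrank ▸ h2),
    Submodule.map_top, range_su2OfVec]

/-- Every 3-dimensional real Lie subalgebra of `u(2)` (a submodule of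
skew-Hermitian `2×2` complex matrices closed under the commutator bracket)
equals `su(2)`, the traceless skew-Hermitian matrices. -/
theorem three_dim_subalgebra_of_u2_eq_su2
    (L : Submodule ℝ (Matrix (Fin 2) (Fin 2) ℂ))
    (hskew : ∀ X ∈ L, Xᴴ = -X)
    (hbracket : ∀ X ∈ L, ∀ Y ∈ L, ⁅X, Y⁆ ∈ L)
    (hdim : Module.finrank ℝ L = 3) :
    ∀ X : Matrix (Fin 2) (Fin 2) ℂ, X ∈ L ↔ (Xᴴ = -X ∧ X.trace = 0) := by
  let imTrace : Matrix (Fin 2) (Fin 2) ℂ →ₗ[ℝ] ℝ := imLm ∘ₗ traceLinearMap (Fin 2) ℝ ℂ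
  have hK : L ⊓ LinearMap.ker imTrace = su2 := by
    refine eq_su2_of_two_le_finrank _ ?_ ?_ ?_
    · rintro X ⟨hXL, hXim⟩
      have hXre := re_trace_eq_zero_of_conjTranspose_eq_neg (hskew X hXL)
      exact ⟨hskew X hXL, Complex.ext hXre hXim⟩
    · rintro X ⟨hXL, -⟩ Y ⟨hYL, -⟩
      exact ⟨hbracket X hXL Y hYL, by simp [imTrace]⟩
    · have := L.finrank_le_finrank_inf_ker_add_one imTrace
      omega
  have hL : su2 = L :=
    Submodule.eq_of_le_of_finrank_eq (hK ▸ inf_le_left) (by rw [finrank_su2, hdim])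
  intro X
  rw [← hL]
  rfl
end

section
/- For distinct points a₁, ..., a_s in the open unit disc Δ ⊂ ℂ and complex numbers b₁, ..., b_s, let φ(w) = Σ_{j=1}^s b_j ∏_{i≠j} (w − a_i)/(a_j − a_i) be the Lagrange interpolation polynomial. If a_j are within δ of the points 2^{-j} (j=1,...,s) and Σ_j |b_j|² < δ² for sufficiently small δ > 0 (e.g. δ < 4^{-s²}), then |φ(w)| < 1 for all |w| < 1. -/
open Finset Complex

/-- If the distinct interpolation nodes `a j` are within `δ` of the points
`2⁻ʲ` (`j = 1, …, s`) and `∑ |b j|² < δ²` with `0 < δ < 4^(-s²)`, then the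
Lagrange interpolation polynomial `φ` through `(a j, b j)` satisfies
`|φ(w)| < 1` on the unit disc. -/
theorem lagrange_interpolation_small_on_disc (s : ℕ) (a b : Fin s → ℂ)
    (hinj : Function.Injective a) (ha : ∀ j, ‖a j‖ < 1)
    (δ : ℝ) (hδpos : 0 < δ) (hδ : δ < ((4 : ℝ) ^ (s ^ 2))⁻¹)
    (hnear : ∀ j, ‖a j - (2 : ℂ)⁻¹ ^ ((j : ℕ) + 1)‖ < δ)
    (hb : ∑ j, ‖b j‖ ^ 2 < δ ^ 2) :
    ∀ w : ℂ, ‖w‖ < 1 →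
      ‖∑ j, b j * ∏ i ∈ univ.erase j, (w - a i) / (a j - a i)‖ < 1 := by
  intro w hw
  rcases Nat.eq_zero_or_pos s with hs | hs
  · subst hs; simp
  -- δ bound in base 2
  have h42 : (4:ℝ) ^ (s^2) = 2 ^ (2 * s^2) := by
    rw [pow_mul]; norm_num
  have hδ2 : δ < ((2:ℝ) ^ (2 * s^2))⁻¹ := by rwa [h42] at hδ
  have hδ2' : δ < (2:ℝ)⁻¹ ^ (2 * s^2) := by rwa [inv_pow]
  -- aux real separation
  have aux : ∀ m n : ℕ, m < n → n < s →
      (2:ℝ)⁻¹^(s+1) ≤ (2:ℝ)⁻¹^(m+1) - (2:ℝ)⁻¹^(n+1) := by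
    intro m n hmn hns
    have h1 : (2:ℝ)⁻¹^(n+1) ≤ (2:ℝ)⁻¹^(m+2) :=
      pow_le_pow_of_le_one (by norm_num) (by norm_num) (by omega)
    have h2 : (2:ℝ)⁻¹^(s+1) ≤ (2:ℝ)⁻¹^(m+2) :=
      pow_le_pow_of_le_one (by norm_num) (by norm_num) (by omega)
    have h3 : (2:ℝ)⁻¹^(m+1) = 2 * (2:ℝ)⁻¹^(m+2) := by rw [pow_succ]; ring
    linarith
  -- node separation
  have key : ∀ i j : Fin s, i ≠ j → (2:ℝ)⁻¹^(s+2) ≤ ‖a j - a i‖ := by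
    intro i j hij
    have hijn : (i:ℕ) ≠ (j:ℕ) := fun h => hij (Fin.ext h)
    have hs2 : 2 ≤ s := by have := i.2; have := j.2; omega
    have hδsmall : δ ≤ (2:ℝ)⁻¹^(s+3) := by
      have hle : s + 3 ≤ 2 * s^2 := by nlinarith
      have h1 : (2:ℝ)⁻¹^(2*s^2) ≤ (2:ℝ)⁻¹^(s+3) :=
        pow_le_pow_of_le_one (by norm_num) (by norm_num) hle
      linarith
    set cj : ℂ := (2:ℂ)⁻¹^((j:ℕ)+1) with hcj
    set ci : ℂ := (2:ℂ)⁻¹^((i:ℕ)+1) with hci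
    have hcast : ∀ k : ℕ, ((2:ℂ)⁻¹^(k+1)) = ((((2:ℝ)⁻¹^(k+1) : ℝ)) : ℂ) := by
      intro k; push_cast; ring
    have hsep : (2:ℝ)⁻¹^(s+1) ≤ ‖cj - ci‖ := by
      rw [hcj, hci, hcast, hcast, ← Complex.ofReal_sub, Complex.norm_real, Real.norm_eq_abs]
      rcases lt_or_gt_of_ne hijn with h | h
      · have h1 := aux i j h j.2
        rw [abs_sub_comm, _root_.abs_of_nonneg (le_trans (by positivity) h1)]
        exact h1
      · have h1 := aux j i h i.2
        rw [_root_.abs_of_nonneg (le_trans (by positivity) h1)]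
        exact h1
    have tri : ‖cj - ci‖ ≤
        ‖a j - cj‖ + (‖a j - a i‖ + ‖a i - ci‖) := by
      calc ‖cj - ci‖ ≤ ‖cj - a j‖ + ‖a j - ci‖ :=
            norm_sub_le_norm_sub_add_norm_sub _ _ _
        _ ≤ ‖cj - a j‖ + (‖a j - a i‖ + ‖a i - ci‖) := by
            gcongr; exact norm_sub_le_norm_sub_add_norm_sub _ _ _
        _ = _ := by rw [norm_sub_rev cj (a j)]
    have h1 := hnear j
    have h2 := hnear i
    rw [← hcj] at h1
    rw [← hci] at h2
    have e1 : (2:ℝ)⁻¹^(s+1) = 2 * (2:ℝ)⁻¹^(s+2) := by rw [pow_succ]; ring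
    have e2 : (2:ℝ)⁻¹^(s+3) = (2:ℝ)⁻¹^(s+2) * 2⁻¹ := pow_succ _ _
    linarith
  -- per-factor bound
  have factor : ∀ i j : Fin s, i ≠ j →
      ‖(w - a i) / (a j - a i)‖ ≤ (2:ℝ)^(s+3) := by
    intro i j hij
    rw [norm_div]
    have hnum : ‖w - a i‖ ≤ 2 := by
      have := (norm_sub_le w (a i))
      have hai := ha i
      calc ‖w - a i‖ ≤ ‖w‖ + ‖a i‖ :=
            norm_sub_le w (a i)
        _ ≤ 2 := by linarith
    have hden := key i j hij
    have hdenpos : (0:ℝ) < (2:ℝ)⁻¹^(s+2) := by positivity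
    calc ‖w - a i‖ / ‖a j - a i‖
        ≤ 2 / (2:ℝ)⁻¹^(s+2) := by
          apply div_le_div₀ (by norm_num) hnum hdenpos hden
      _ = (2:ℝ)^(s+3) := by
          rw [inv_pow, div_eq_mul_inv, inv_inv, ← pow_succ']
  -- product bound
  have hprod : ∀ j : Fin s,
      ‖∏ i ∈ univ.erase j, (w - a i) / (a j - a i)‖ ≤ (2:ℝ)^((s+3)*(s-1)) := by
    intro j
    rw [norm_prod]
    calc ∏ i ∈ univ.erase j, ‖(w - a i)/(a j - a i)‖
        ≤ ∏ _i ∈ univ.erase j, (2:ℝ)^(s+3) :=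
          Finset.prod_le_prod (fun i _ => norm_nonneg _)
            (fun i hi => factor i j (Finset.ne_of_mem_erase hi))
      _ = ((2:ℝ)^(s+3))^((univ.erase j).card) := Finset.prod_const _
      _ = (2:ℝ)^((s+3)*(s-1)) := by
          rw [Finset.card_erase_of_mem (mem_univ _), Finset.card_univ, Fintype.card_fin,
            ← pow_mul]
  -- |b j| ≤ δ
  have hbj : ∀ j : Fin s, ‖b j‖ ≤ δ := by
    intro j
    have h1 : ‖b j‖ ^ 2 ≤ ∑ k, ‖b k‖ ^ 2 :=
      Finset.single_le_sum (f := fun k => ‖b k‖ ^ 2) (fun k _ => by positivity) (mem_univ j)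
    have h2 : ‖b j‖ ^ 2 < δ ^ 2 := lt_of_le_of_lt h1 hb
    exact (lt_of_pow_lt_pow_left₀ 2 hδpos.le h2).le
  -- assemble
  have E := (s+3)*(s-1)
  have hsum : ‖∑ j, b j * ∏ i ∈ univ.erase j, (w - a i) / (a j - a i)‖
      ≤ (s:ℝ) * (δ * (2:ℝ)^((s+3)*(s-1))) := by
    calc ‖∑ j, b j * ∏ i ∈ univ.erase j, (w - a i) / (a j - a i)‖
        ≤ ∑ j, ‖b j * ∏ i ∈ univ.erase j, (w - a i) / (a j - a i)‖ :=
          norm_sum_le _ _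
      _ ≤ ∑ _j : Fin s, δ * (2:ℝ)^((s+3)*(s-1)) := by
          apply Finset.sum_le_sum
          intro j _
          rw [norm_mul]
          exact mul_le_mul (hbj j) (hprod j) (norm_nonneg _) hδpos.le
      _ = (s:ℝ) * (δ * (2:ℝ)^((s+3)*(s-1))) := by
          rw [Finset.sum_const, Finset.card_univ, Fintype.card_fin, nsmul_eq_mul]
  have hE : s + (s+3)*(s-1) ≤ 2 * s^2 := by
    rcases s with _ | t
    · simp
    · simp only [Nat.succ_sub_one]
      have h : t ≤ t * t := by
        rcases t with _ | u
        · simp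
        · exact Nat.le_mul_of_pos_left _ u.succ_pos
      nlinarith
  have hslt : (s:ℝ) ≤ (2:ℝ)^s := by
    calc (s:ℝ) ≤ ((2^s : ℕ) : ℝ) := by exact_mod_cast (Nat.lt_two_pow_self (n := s)).le
      _ = (2:ℝ)^s := by push_cast; ring
  have hfin : (s:ℝ) * (δ * (2:ℝ)^((s+3)*(s-1))) < 1 := by
    calc (s:ℝ) * (δ * (2:ℝ)^((s+3)*(s-1)))
        ≤ (2:ℝ)^s * (δ * (2:ℝ)^((s+3)*(s-1))) := by
          apply mul_le_mul_of_nonneg_right hslt (by positivity)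
      _ = δ * (2:ℝ)^(s + (s+3)*(s-1)) := by rw [pow_add]; ring
      _ ≤ δ * (2:ℝ)^(2*s^2) := by
          apply mul_le_mul_of_nonneg_left _ hδpos.le
          exact pow_le_pow_right₀ (by norm_num) hE
      _ < ((2:ℝ)^(2*s^2))⁻¹ * (2:ℝ)^(2*s^2) := by
          apply mul_lt_mul_of_pos_right hδ2 (by positivity)
      _ = 1 := inv_mul_cancel₀ (by positivity)
  exact lt_of_le_of_lt hsum hfin
end

section
/- For any two distinct points p₁, p₂ in the unit bidisc Δ² ⊂ ℂ², there exists a holomorphic map f : Δ² → Δ² with f ∘ f = f, f(p₁) = p₁, f(p₂) = p₂, and f ≠ id. (Hence no two points form a determining set for holomorphic endomorphisms of Δ², i.e., ŝ₀(Δ²) > 2.) -/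
open Metric Set

/-!
Write `φ_a(w) = (w - a) / (1 - ā w)` for the Möbius automorphism of the unit disc sending `a`
to `0`. For `p₁ = (a, b)` and `p₂ = (c, d)`, after swapping the coordinates if necessary we may
assume `|φ_b(d)| ≤ |φ_a(c)|`. Then `λ = φ_b(d) / φ_a(c)` lies in the closed unit disc and
`g = φ_b⁻¹ ∘ (λ • φ_a)` is a holomorphic self-map of the disc with `g a = b` and `g c = d`, so
the retraction `(z₁, z₂) ↦ (z₁, g z₁)` of the bidisc onto the graph of `g` fixes both points.
-/

open ComplexConjugate

noncomputable def discAut (a w : ℂ) : ℂ := (w - a) / (1 - conj a * w)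

section discAut

variable {a w : ℂ}

theorem one_sub_conj_mul_ne_zero (ha : ‖a‖ < 1) (hw : ‖w‖ < 1) : 1 - conj a * w ≠ 0 := by
  have hlt : ‖conj a * w‖ < 1 := by
    rw [norm_mul, Complex.norm_conj]
    exact mul_lt_one_of_nonneg_of_lt_one_left (norm_nonneg a) ha hw.le
  intro h
  rw [← sub_eq_zero.mp h, norm_one] at hlt
  exact hlt.false

theorem normSq_one_sub_conj_mul_sub_normSq_sub (a w : ℂ) :
    Complex.normSq (1 - conj a * w) - Complex.normSq (w - a) =
      (1 - Complex.normSq a) * (1 - Complex.normSq w) := by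
  simp only [Complex.normSq_apply, Complex.sub_re, Complex.sub_im, Complex.one_re,
    Complex.one_im, Complex.mul_re, Complex.mul_im, Complex.conj_re, Complex.conj_im]
  ring

theorem norm_discAut_lt_one (ha : ‖a‖ < 1) (hw : ‖w‖ < 1) : ‖discAut a w‖ < 1 := by
  rw [discAut, norm_div, div_lt_one (norm_pos_iff.mpr (one_sub_conj_mul_ne_zero ha hw))]
  have hnormSq : Complex.normSq (w - a) < Complex.normSq (1 - conj a * w) := by
    have ha' : Complex.normSq a < 1 := by rw [← Complex.sq_norm]; nlinarith [norm_nonneg a]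
    have hw' : Complex.normSq w < 1 := by rw [← Complex.sq_norm]; nlinarith [norm_nonneg w]
    nlinarith [normSq_one_sub_conj_mul_sub_normSq_sub a w]
  rw [← Complex.sq_norm, ← Complex.sq_norm] at hnormSq
  exact lt_of_pow_lt_pow_left₀ 2 (norm_nonneg _) hnormSq

@[simp]
theorem discAut_self (a : ℂ) : discAut a a = 0 := by simp [discAut]

@[simp]
theorem discAut_zero (a : ℂ) : discAut a 0 = -a := by simp [discAut]

theorem discAut_neg_discAut (ha : ‖a‖ < 1) (hw : ‖w‖ < 1) : discAut (-a) (discAut a w) = w := by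
  have hden := one_sub_conj_mul_ne_zero ha hw
  have hden' : 1 - conj (-a) * discAut a w ≠ 0 :=
    one_sub_conj_mul_ne_zero (by rwa [norm_neg]) (norm_discAut_lt_one ha hw)
  rw [discAut, div_eq_iff hden']
  rw [discAut] at hden' ⊢
  simp only [map_neg] at hden' ⊢
  field_simp at hden' ⊢
  ring

theorem differentiableOn_discAut (ha : ‖a‖ < 1) : DifferentiableOn ℂ (discAut a) (ball 0 1) :=
  fun _ hw ↦ DifferentiableWithinAt.div (by fun_prop) (by fun_prop)
    (one_sub_conj_mul_ne_zero ha (mem_ball_zero_iff.mp hw))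

theorem mapsTo_discAut (ha : ‖a‖ < 1) : MapsTo (discAut a) (ball 0 1) (ball 0 1) :=
  fun _ hw ↦ mem_ball_zero_iff.mpr (norm_discAut_lt_one ha (mem_ball_zero_iff.mp hw))

end discAut

/-- `‖discAut a c‖` is the pseudo-hyperbolic distance from `a` to `c`. -/
theorem exists_disc_map_of_norm_discAut_le {a b c d : ℂ} (ha : ‖a‖ < 1) (hb : ‖b‖ < 1)
    (hd : ‖d‖ < 1) (hle : ‖discAut b d‖ ≤ ‖discAut a c‖) :
    ∃ g : ℂ → ℂ, DifferentiableOn ℂ g (ball 0 1) ∧ MapsTo g (ball 0 1) (ball 0 1) ∧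
      g a = b ∧ g c = d := by
  set lam := discAut b d / discAut a c
  have hlam : ‖lam‖ ≤ 1 := by
    rw [norm_div]
    exact div_le_one_of_le₀ hle (norm_nonneg _)
  have hmaps : MapsTo (fun w ↦ lam * discAut a w) (ball 0 1) (ball 0 1) := fun w hw ↦ by
    have := mem_ball_zero_iff.mp (mapsTo_discAut ha hw)
    rw [mem_ball_zero_iff, norm_mul]
    exact mul_lt_one_of_nonneg_of_lt_one_right hlam (norm_nonneg _) this
  have hb' : ‖-b‖ < 1 := by rwa [norm_neg]
  refine ⟨discAut (-b) ∘ fun w ↦ lam * discAut a w,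
    (differentiableOn_discAut hb').comp ((differentiableOn_discAut ha).const_mul lam) hmaps,
    (mapsTo_discAut hb').comp hmaps, by simp, ?_⟩
  have hlam_mul : lam * discAut a c = discAut b d := by
    refine div_mul_cancel_of_imp fun h ↦ ?_
    rw [h, norm_zero] at hle
    exact norm_le_zero_iff.mp hle
  simp only [Function.comp_apply, hlam_mul, discAut_neg_discAut hb hd]

def bidisc : Set (ℂ × ℂ) := ball 0 1 ×ˢ ball 0 1

def IsNontrivialRetractionFixing {E : Type*} [NormedAddCommGroup E] [NormedSpace ℂ E]
    (U : Set E) (f : E → E) (p₁ p₂ : E) : Prop :=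
  DifferentiableOn ℂ f U ∧ MapsTo f U U ∧ (∀ z ∈ U, f (f z) = f z) ∧
    f p₁ = p₁ ∧ f p₂ = p₂ ∧ ∃ z ∈ U, f z ≠ z

theorem IsNontrivialRetractionFixing.conj {E F : Type*} [NormedAddCommGroup E]
    [NormedSpace ℂ E] [NormedAddCommGroup F] [NormedSpace ℂ F] {U : Set E} {f : E → E}
    {p₁ p₂ : E} (hf : IsNontrivialRetractionFixing U f p₁ p₂) (e : E ≃L[ℂ] F) :
    IsNontrivialRetractionFixing (e '' U) (e ∘ f ∘ e.symm) (e p₁) (e p₂) := by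
  obtain ⟨hdiff, hmaps, hidem, hfix₁, hfix₂, z, hz, hfz⟩ := hf
  have hsymm : MapsTo e.symm (e '' U) U := by
    rintro _ ⟨x, hx, rfl⟩
    simpa using hx
  refine ⟨e.differentiable.comp_differentiableOn (hdiff.comp e.symm.differentiableOn hsymm),
    (mapsTo_image e U).comp (hmaps.comp hsymm), fun x hx ↦ ?_, by simp [hfix₁], by simp [hfix₂],
    e z, mem_image_of_mem e hz, by simpa using hfz⟩
  simp [hidem _ (hsymm hx)]

theorem isNontrivialRetractionFixing_bidisc_graph {g : ℂ → ℂ}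
    (hg : DifferentiableOn ℂ g (ball 0 1)) (hgm : MapsTo g (ball 0 1) (ball 0 1))
    {p₁ p₂ : ℂ × ℂ} (h₁ : g p₁.1 = p₁.2) (h₂ : g p₂.1 = p₂.2) :
    IsNontrivialRetractionFixing bidisc (fun z ↦ (z.1, g z.1)) p₁ p₂ := by
  have hfst : MapsTo Prod.fst bidisc (ball 0 1) := fun z hz ↦ hz.1
  have hball : (ball (0 : ℂ) 1).Nontrivial := ⟨0, by simp, 1 / 2, by norm_num, by norm_num⟩
  obtain ⟨w, hw, hwg⟩ := hball.exists_ne (g 0)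
  refine ⟨differentiableOn_fst.prodMk (hg.comp differentiableOn_fst hfst),
    fun z hz ↦ ⟨hz.1, hgm hz.1⟩, fun z _ ↦ rfl, by simp [h₁], by simp [h₂],
    (0, w), ⟨by simp, hw⟩, by simpa [eq_comm] using hwg⟩

theorem IsNontrivialRetractionFixing.bidisc_swap {f : ℂ × ℂ → ℂ × ℂ} {p₁ p₂ : ℂ × ℂ}
    (hf : IsNontrivialRetractionFixing bidisc f p₁.swap p₂.swap) :
    IsNontrivialRetractionFixing bidisc (Prod.swap ∘ f ∘ Prod.swap) p₁ p₂ := by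
  have hswap : ⇑(ContinuousLinearEquiv.prodComm ℂ ℂ ℂ) = Prod.swap := rfl
  simpa [bidisc, hswap, image_swap_prod] using hf.conj (ContinuousLinearEquiv.prodComm ℂ ℂ ℂ)

theorem bidisc_two_points_not_determining_general (p₁ p₂ : ℂ × ℂ)
    (h₁ : p₁ ∈ ball (0 : ℂ) 1 ×ˢ ball (0 : ℂ) 1)
    (h₂ : p₂ ∈ ball (0 : ℂ) 1 ×ˢ ball (0 : ℂ) 1) :
    ∃ f : ℂ × ℂ → ℂ × ℂ,
      DifferentiableOn ℂ f (ball (0 : ℂ) 1 ×ˢ ball (0 : ℂ) 1) ∧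
      MapsTo f (ball (0 : ℂ) 1 ×ˢ ball (0 : ℂ) 1) (ball (0 : ℂ) 1 ×ˢ ball (0 : ℂ) 1) ∧
      (∀ z ∈ ball (0 : ℂ) 1 ×ˢ ball (0 : ℂ) 1, f (f z) = f z) ∧
      f p₁ = p₁ ∧ f p₂ = p₂ ∧
      (∃ z ∈ ball (0 : ℂ) 1 ×ˢ ball (0 : ℂ) 1, f z ≠ z) := by
  obtain ⟨ha, hb⟩ : ‖p₁.1‖ < 1 ∧ ‖p₁.2‖ < 1 := by simpa using h₁
  obtain ⟨hc, hd⟩ : ‖p₂.1‖ < 1 ∧ ‖p₂.2‖ < 1 := by simpa using h₂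
  rcases le_total ‖discAut p₁.2 p₂.2‖ ‖discAut p₁.1 p₂.1‖ with hle | hle
  · obtain ⟨g, hg, hgm, hga, hgc⟩ := exists_disc_map_of_norm_discAut_le ha hb hd hle
    exact ⟨_, isNontrivialRetractionFixing_bidisc_graph hg hgm hga hgc⟩
  · obtain ⟨g, hg, hgm, hgb, hgd⟩ := exists_disc_map_of_norm_discAut_le hb ha hc hle
    exact ⟨_, (isNontrivialRetractionFixing_bidisc_graph (p₁ := p₁.swap) (p₂ := p₂.swap)
      hg hgm hgb hgd).bidisc_swap⟩

/-- For any two distinct points of the unit bidisc there is a holomorphic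
retraction of the bidisc fixing both points which is not the identity; hence
no two points form a determining set for endomorphisms of `Δ²`. -/
theorem bidisc_two_points_not_determining (p₁ p₂ : ℂ × ℂ)
    (h₁ : p₁ ∈ ball (0 : ℂ) 1 ×ˢ ball (0 : ℂ) 1)
    (h₂ : p₂ ∈ ball (0 : ℂ) 1 ×ˢ ball (0 : ℂ) 1) (hne : p₁ ≠ p₂) :
    ∃ f : ℂ × ℂ → ℂ × ℂ,
      DifferentiableOn ℂ f (ball (0 : ℂ) 1 ×ˢ ball (0 : ℂ) 1) ∧
      MapsTo f (ball (0 : ℂ) 1 ×ˢ ball (0 : ℂ) 1) (ball (0 : ℂ) 1 ×ˢ ball (0 : ℂ) 1) ∧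
      (∀ z ∈ ball (0 : ℂ) 1 ×ˢ ball (0 : ℂ) 1, f (f z) = f z) ∧
      f p₁ = p₁ ∧ f p₂ = p₂ ∧
      (∃ z ∈ ball (0 : ℂ) 1 ×ˢ ball (0 : ℂ) 1, f z ≠ z) :=
  bidisc_two_points_not_determining_general p₁ p₂ h₁ h₂
end
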